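/- arXiv:2603.02774 — 4 statements merged into one kernel-verified Lean document; each statement's English description precedes it below -/
import Mathlib

section
/- Suppose the Markov semigroup (P_t)_{t≥0} on the metric space (E,ρ) satisfies the asymptotic log-Harnack inequality with some symmetric functions Φ, Ψ_t : E×E → (0,∞), where Ψ_t(x,y) is nonincreasing in t and tends to 0 as t → ∞ for each pair (x,y), and suppose μ is an invariant probability measure for (P_t). Then for every x ∈ E and every f ∈ Lip(E), limsup_{t→∞} P_t f(x) ≤ log( (∫_E e^{f(y)} μ(dy)) / (∫_E e^{−Φ(x,y)} μ(dy)) ). -/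
open MeasureTheory ProbabilityTheory Filter Topology ENNReal

/-- The local localSlope `|∇f|(x) = limsup_{y→x} |f(x)−f(y)|/ρ(x,y)`, valued in `[0,∞]`. -/
noncomputable def localSlope {E : Type*} [MetricSpace E] (f : E → ℝ) (x : E) : ℝ≥0∞ :=
  Filter.limsup (fun y => ENNReal.ofReal (|f x - f y| / dist x y)) (𝓝[≠] x)

/-- `‖∇f‖_∞ = sup_x |∇f|(x)`, valued in `[0,∞]`. -/
noncomputable def localSlopeSup {E : Type*} [MetricSpace E] (f : E → ℝ) : ℝ≥0∞ :=
  ⨆ x, localSlope f x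

/-- `(P_t)` is a Markov semigroup: each `P_t` is a Markov (probability) kernel,
`P_0(x,·) = δ_x`, and `P_{t+s} = P_s ∘ P_t` for `s,t ≥ 0`. -/
def IsMarkovSemigroup {E : Type*} [MeasurableSpace E]
    (P : ℝ → Kernel E E) : Prop :=
  (∀ t, 0 ≤ t → IsMarkovKernel (P t)) ∧
  (∀ x, P 0 x = Measure.dirac x) ∧
  (∀ s t, 0 ≤ s → 0 ≤ t → P (t + s) = (P s).comp (P t))

/-- `μ` is an invariant probability measure of the semigroup `(P_t)`:
`∫ P_t f dμ = ∫ f dμ` for all `t ≥ 0` and bounded measurable `f`. -/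
def IsInvariantMeasure {E : Type*} [MeasurableSpace E]
    (P : ℝ → Kernel E E) (μ : Measure E) : Prop :=
  ∀ t, 0 ≤ t → ∀ f : E → ℝ, Measurable f → (∃ C, ∀ x, |f x| ≤ C) →
    ∫ x, (∫ z, f z ∂(P t x)) ∂μ = ∫ x, f x ∂μ

/-- The asymptotic log-Harnack inequality:
`P_t(log f)(x) ≤ log P_t f(y) + Φ(x,y) + Ψ_t(x,y) ‖∇ log f‖_∞` for all `t > 0`,
`x, y` and all bounded measurable `f > 0` with `‖∇ log f‖_∞ < ∞`. -/
def AsymptoticLogHarnack {E : Type*} [MetricSpace E] [MeasurableSpace E]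
    (P : ℝ → Kernel E E) (Φ : E → E → ℝ) (Ψ : ℝ → E → E → ℝ) : Prop :=
  ∀ t, 0 < t → ∀ f : E → ℝ, Measurable f → (∃ C, ∀ x, |f x| ≤ C) →
    (∀ x, 0 < f x) → localSlopeSup (fun x => Real.log (f x)) ≠ ⊤ →
    ∀ x y : E,
      (∫ z, Real.log (f z) ∂(P t x)) ≤
        Real.log (∫ z, f z ∂(P t y)) + Φ x y +
          Ψ t x y * (localSlopeSup (fun x => Real.log (f x))).toReal

/-- If a Markov semigroup satisfies the asymptotic log-Harnack inequality with
symmetric positive `Φ, Ψ_t` (`Ψ_t(x,y)` nonincreasing in `t`, tending to `0` as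
`t → ∞`), and `μ` is an invariant probability measure, then for every `x` and every
bounded Lipschitz `f`,
`limsup_{t→∞} P_t f(x) ≤ log( μ(e^f) / ∫ e^{−Φ(x,y)} μ(dy) )`. -/
theorem asymptotic_heat_kernel_estimate
    {E : Type*} [MetricSpace E] [MeasurableSpace E] [BorelSpace E]
    (P : ℝ → Kernel E E) (Φ : E → E → ℝ) (Ψ : ℝ → E → E → ℝ)
    (hP : IsMarkovSemigroup P)
    (hΦmeas : Measurable (Function.uncurry Φ))
    (hΦpos : ∀ x y, 0 < Φ x y) (hΦsymm : ∀ x y, Φ x y = Φ y x)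
    (hΨpos : ∀ t, 0 < t → ∀ x y, 0 < Ψ t x y)
    (hΨsymm : ∀ t x y, Ψ t x y = Ψ t y x)
    (hΨmono : ∀ x y s t, 0 < s → s ≤ t → Ψ t x y ≤ Ψ s x y)
    (hΨ0 : ∀ x y, Tendsto (fun t => Ψ t x y) atTop (𝓝 0))
    (hALH : AsymptoticLogHarnack P Φ Ψ)
    (μ : Measure E) [IsProbabilityMeasure μ] (hμ : IsInvariantMeasure P μ) :
    ∀ x : E, ∀ f : E → ℝ, Measurable f → (∃ C, ∀ z, |f z| ≤ C) →
      localSlopeSup f ≠ ⊤ →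
      Filter.limsup (fun t => ∫ z, f z ∂(P t x)) atTop ≤
        Real.log ((∫ y, Real.exp (f y) ∂μ) / (∫ y, Real.exp (-(Φ x y)) ∂μ)) := by
  intro x f hf hfb hslope
  obtain ⟨C₀, hC₀⟩ := hfb
  set C : ℝ := |C₀| with hCdef
  have hC : ∀ z, |f z| ≤ C := fun z => (hC₀ z).trans (le_abs_self _)
  set g : E → ℝ := fun z => Real.exp (f z) with hgdef
  have hgmeas : Measurable g := Real.measurable_exp.comp hf
  have hgb : ∀ z, |g z| ≤ Real.exp C := fun z => by
    rw [abs_of_pos (Real.exp_pos _)]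
    exact Real.exp_le_exp.2 ((le_abs_self _).trans (hC z))
  have hgpos : ∀ z, 0 < g z := fun z => Real.exp_pos _
  have hlogg : (fun z => Real.log (g z)) = f := funext fun z => Real.log_exp _
  set L : ℝ := (localSlopeSup f).toReal with hLdef
  have hL0 : 0 ≤ L := ENNReal.toReal_nonneg
  set M : ℝ → ℝ := fun t => ∫ z, f z ∂(P t x) with hMdef
  set G : ℝ → E → ℝ := fun t y => ∫ z, g z ∂(P t y) with hGdef
  have key : ∀ t, 0 < t → ∀ y, M t ≤ Real.log (G t y) + Φ x y + Ψ t x y * L := by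
    intro t ht y
    have h := hALH t ht g hgmeas ⟨Real.exp C, hgb⟩ hgpos
      (by rw [hlogg]; exact hslope) x y
    rw [hlogg] at h
    exact h
  have hΦx : Measurable fun y => Φ x y := hΦmeas.comp measurable_prodMk_left
  -- measurability and bounds for G
  have hGmeas : ∀ t, 0 ≤ t → Measurable (G t) := by
    intro t ht
    haveI := hP.1 t ht
    have : StronglyMeasurable (Function.uncurry fun (_ : E) z => g z) :=
      (hgmeas.comp measurable_snd).stronglyMeasurable
    exact (this.integral_kernel_prod_right (κ := P t)).measurable
  have hGub : ∀ t, 0 ≤ t → ∀ y, G t y ≤ Real.exp C := by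
    intro t ht y
    haveI := hP.1 t ht
    have := norm_integral_le_of_norm_le_const (μ := P t y) (f := g) (C := Real.exp C)
      (Eventually.of_forall fun z => by rw [Real.norm_eq_abs]; exact hgb z)
    rw [probReal_univ, mul_one] at this
    exact (le_abs_self _).trans this
  have hGlb : ∀ t, 0 ≤ t → ∀ y, Real.exp (-C) ≤ G t y := by
    intro t ht y
    haveI := hP.1 t ht
    have hgint : Integrable g (P t y) :=
      (integrable_const (Real.exp C)).mono' hgmeas.aestronglyMeasurable
        (Eventually.of_forall fun z => by rw [Real.norm_eq_abs]; exact hgb z)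
    calc Real.exp (-C) = ∫ _, Real.exp (-C) ∂(P t y) := by
          rw [integral_const, probReal_univ, one_smul]
      _ ≤ ∫ z, g z ∂(P t y) := by
          refine integral_mono (integrable_const _) hgint fun z => ?_
          exact Real.exp_le_exp.2 (neg_le_of_abs_le (hC z))
  have hGpos : ∀ t, 0 ≤ t → ∀ y, 0 < G t y :=
    fun t ht y => lt_of_lt_of_le (Real.exp_pos _) (hGlb t ht y)
  have hMb : ∀ t, 0 ≤ t → |M t| ≤ C := by
    intro t ht
    haveI := hP.1 t ht
    have := norm_integral_le_of_norm_le_const (μ := P t x) (f := f) (C := C)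
      (Eventually.of_forall fun z => by rw [Real.norm_eq_abs]; exact hC z)
    rwa [probReal_univ, mul_one, Real.norm_eq_abs] at this
  -- the measurable remainder
  set r : ℝ → E → ℝ := fun t y => max 0 (M t - Real.log (G t y) - Φ x y) with hrdef
  have hrnn : ∀ t y, 0 ≤ r t y := fun t y => le_max_left _ _
  have hrmeas : ∀ t, 0 ≤ t → Measurable (r t) := fun t ht =>
    measurable_const.max
      (((measurable_const.sub (Real.measurable_log.comp (hGmeas t ht))).sub hΦx))
  have hrle : ∀ t, 0 < t → ∀ y, r t y ≤ Ψ t x y * L := by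
    intro t ht y
    refine max_le (mul_nonneg (hΨpos t ht x y).le hL0) ?_
    have := key t ht y
    linarith
  have claim : ∀ t, 0 ≤ t → ∀ y, Real.exp (M t) * Real.exp (-Φ x y - r t y) ≤ G t y := by
    intro t ht y
    rw [← Real.exp_add]
    have harg : M t + (-Φ x y - r t y) = M t - Φ x y - r t y := by ring
    rw [harg]
    have hle : M t - Φ x y - r t y ≤ Real.log (G t y) := by
      rcases le_or_gt (M t - Real.log (G t y) - Φ x y) 0 with h | h
      · have hr0 : r t y = max 0 (M t - Real.log (G t y) - Φ x y) := rfl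
        rw [hr0, max_eq_left h]
        linarith
      · have hr0 : r t y = M t - Real.log (G t y) - Φ x y := max_eq_right h.le
        rw [hr0]; linarith
    calc Real.exp (M t - Φ x y - r t y) ≤ Real.exp (Real.log (G t y)) := Real.exp_le_exp.2 hle
      _ = G t y := Real.exp_log (hGpos t ht y)
  -- integrals over μ
  set A : ℝ := ∫ y, Real.exp (f y) ∂μ with hAdef
  set B : ℝ := ∫ y, Real.exp (-(Φ x y)) ∂μ with hBdef
  set I : ℝ → ℝ := fun t => ∫ y, Real.exp (-Φ x y - r t y) ∂μ with hIdef
  have hIintegrand_meas : ∀ t, 0 ≤ t → Measurable fun y => Real.exp (-Φ x y - r t y) :=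
    fun t ht => Real.measurable_exp.comp ((hΦx.neg).sub (hrmeas t ht))
  have hIintegrand_le : ∀ t y, Real.exp (-Φ x y - r t y) ≤ 1 := fun t y =>
    Real.exp_le_one_iff.2 (by have := hΦpos x y; have := hrnn t y; linarith)
  have hIint : ∀ t, 0 ≤ t → Integrable (fun y => Real.exp (-Φ x y - r t y)) μ := by
    intro t ht
    refine (integrable_const (1 : ℝ)).mono' (hIintegrand_meas t ht).aestronglyMeasurable ?_
    exact Eventually.of_forall fun y => by
      rw [Real.norm_eq_abs, abs_of_pos (Real.exp_pos _)]; exact hIintegrand_le t y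
  have hIpos : ∀ t, 0 ≤ t → 0 < I t := by
    intro t ht
    refine (integral_pos_iff_support_of_nonneg (fun y => (Real.exp_pos _).le) (hIint t ht)).2 ?_
    have hsupp : (Function.support fun y => Real.exp (-Φ x y - r t y)) = Set.univ :=
      Set.eq_univ_of_forall fun y => (Real.exp_pos _).ne'
    rw [hsupp, measure_univ]; exact one_pos
  have hGint : ∀ t, 0 ≤ t → Integrable (G t) μ := by
    intro t ht
    refine (integrable_const (Real.exp C)).mono' (hGmeas t ht).aestronglyMeasurable ?_
    exact Eventually.of_forall fun y => by
      rw [Real.norm_eq_abs, abs_of_pos (hGpos t ht y)]; exact hGub t ht y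
  -- the key integrated inequality
  have step : ∀ t, 0 ≤ t → Real.exp (M t) * I t ≤ A := by
    intro t ht
    have h1 : ∫ y, Real.exp (M t) * Real.exp (-Φ x y - r t y) ∂μ ≤ ∫ y, G t y ∂μ := by
      refine integral_mono_of_nonneg ?_ (hGint t ht) ?_
      · exact Eventually.of_forall fun y => (mul_pos (Real.exp_pos _) (Real.exp_pos _)).le
      · exact Eventually.of_forall fun y => claim t ht y
    have h2 : ∫ y, G t y ∂μ = A := hμ t ht g hgmeas ⟨Real.exp C, hgb⟩
    rw [integral_const_mul] at h1
    calc Real.exp (M t) * I t ≤ ∫ y, G t y ∂μ := h1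
      _ = A := h2
  -- positivity of A and B
  have hAint : Integrable (fun y => Real.exp (f y)) μ :=
    (integrable_const (Real.exp C)).mono' hgmeas.aestronglyMeasurable
      (Eventually.of_forall fun z => by rw [Real.norm_eq_abs]; exact hgb z)
  have hApos : 0 < A := by
    refine (integral_pos_iff_support_of_nonneg (fun y => (Real.exp_pos _).le) hAint).2 ?_
    have hsupp : (Function.support fun y => Real.exp (f y)) = Set.univ :=
      Set.eq_univ_of_forall fun y => (Real.exp_pos _).ne'
    rw [hsupp, measure_univ]; exact one_pos
  have hBint : Integrable (fun y => Real.exp (-(Φ x y))) μ := by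
    refine (integrable_const (1 : ℝ)).mono'
      ((Real.measurable_exp.comp hΦx.neg).aestronglyMeasurable) ?_
    exact Eventually.of_forall fun y => by
      rw [Real.norm_eq_abs, abs_of_pos (Real.exp_pos _)]
      exact Real.exp_le_one_iff.2 (by have := hΦpos x y; linarith)
  have hBpos : 0 < B := by
    refine (integral_pos_iff_support_of_nonneg (fun y => (Real.exp_pos _).le) hBint).2 ?_
    have hsupp : (Function.support fun y => Real.exp (-(Φ x y))) = Set.univ :=
      Set.eq_univ_of_forall fun y => (Real.exp_pos _).ne'
    rw [hsupp, measure_univ]; exact one_pos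
  -- I t → B as t → ∞
  have hItendsto : Tendsto I atTop (𝓝 B) := by
    refine tendsto_iff_seq_tendsto.mpr fun u hu => ?_
    set v : ℕ → ℝ := fun n => max (u n) 1 with hvdef
    have hv1 : ∀ n, (0 : ℝ) ≤ v n := fun n => le_trans zero_le_one (le_max_right _ _)
    have hvtop : Tendsto v atTop atTop := tendsto_atTop_mono (fun n => le_max_left _ _) hu
    have hvt : Tendsto (fun n => I (v n)) atTop (𝓝 B) := by
      refine tendsto_integral_of_dominated_convergence (fun _ => (1 : ℝ))
        (fun n => (hIintegrand_meas (v n) (hv1 n)).aestronglyMeasurable)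
        (integrable_const 1) (fun n => Eventually.of_forall fun y => ?_)
        (Eventually.of_forall fun y => ?_)
      · rw [Real.norm_eq_abs, abs_of_pos (Real.exp_pos _)]
        exact hIintegrand_le (v n) y
      · have hr0 : Tendsto (fun n => r (v n) y) atTop (𝓝 0) := by
          refine squeeze_zero (fun n => hrnn (v n) y) (fun n => hrle (v n) ?_ y) ?_
          · exact lt_of_lt_of_le one_pos (le_max_right _ _)
          · have h1 : Tendsto (fun n => Ψ (v n) x y) atTop (𝓝 0) := (hΨ0 x y).comp hvtop
            have := h1.mul_const L
            rwa [zero_mul] at this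
        have : Tendsto (fun n => -Φ x y - r (v n) y) atTop (𝓝 (-Φ x y - 0)) :=
          tendsto_const_nhds.sub hr0
        rw [sub_zero] at this
        exact this.rexp
    refine hvt.congr' ?_
    filter_upwards [hu.eventually_ge_atTop 1] with n hn
    have : v n = u n := max_eq_left hn
    rw [this]
    rfl
  -- conclusion
  have hdiv : Real.log (A / B) = Real.log A - Real.log B := Real.log_div hApos.ne' hBpos.ne'
  refine le_of_forall_pos_le_add fun ε hε => ?_
  have hBε : B * Real.exp (-ε) < B :=
    mul_lt_of_lt_one_right hBpos (Real.exp_lt_one_iff.2 (neg_neg_iff_pos.2 hε))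
  have hBεpos : 0 < B * Real.exp (-ε) := mul_pos hBpos (Real.exp_pos _)
  have hev : ∀ᶠ t in atTop, B * Real.exp (-ε) < I t := hItendsto.eventually (lt_mem_nhds hBε)
  refine limsup_le_of_le (isCoboundedUnder_le_of_eventually_le atTop (x := -C) ?_) ?_
  · filter_upwards [eventually_ge_atTop (0 : ℝ)] with t ht
    exact neg_le_of_abs_le (hMb t ht)
  · filter_upwards [eventually_ge_atTop (0 : ℝ), hev] with t ht hIt
    have hIt0 : 0 < I t := hIpos t ht
    have h3 : Real.exp (M t) ≤ A / I t := (le_div_iff₀ hIt0).2 (step t ht)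
    have h4 : M t ≤ Real.log (A / I t) := by
      have := Real.log_le_log (Real.exp_pos _) h3
      rwa [Real.log_exp] at this
    have h5 : Real.log (A / I t) = Real.log A - Real.log (I t) :=
      Real.log_div hApos.ne' hIt0.ne'
    have h6 : Real.log B - ε ≤ Real.log (I t) := by
      have := Real.log_le_log hBεpos hIt.le
      rwa [Real.log_mul hBpos.ne' (Real.exp_pos _).ne', Real.log_exp] at this
    rw [hdiv]
    linarith
end

section
/- Suppose the Markov semigroup (P_t)_{t≥0} on the metric space (E,ρ) satisfies the asymptotic log-Harnack inequality with some symmetric functions Φ, Ψ_t : E×E → (0,∞), where Ψ_t(x,y) is nonincreasing in t and tends to 0 as t → ∞ for each pair (x,y), and suppose μ is an invariant probability measure for (P_t). Then for every closed set A ⊆ E with μ(A) = 0 and every x ∈ E, limsup_{t→∞} P_t(x, A) = 0, i.e. lim_{t→∞} P_t 1_A(x) = 0. -/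
open MeasureTheory ProbabilityTheory Filter Topology ENNReal

lemma localSlopeSup_le_of_lipschitz {E : Type*} [MetricSpace E] {K : NNReal} {h : E → ℝ}
    (hh : LipschitzWith K h) : localSlopeSup h ≤ K := by
  refine iSup_le fun x => ?_
  refine Filter.limsup_le_of_le (by isBoundedDefault) ?_
  filter_upwards [self_mem_nhdsWithin] with y hy
  have hd : (0:ℝ) < dist x y := dist_pos.2 fun h' => hy h'.symm
  have h1 : |h x - h y| ≤ K * dist x y := by
    have := hh.dist_le_mul x y
    rwa [Real.dist_eq] at this
  calc ENNReal.ofReal (|h x - h y| / dist x y) ≤ ENNReal.ofReal K := by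
        apply ENNReal.ofReal_le_ofReal
        rw [div_le_iff₀ hd]
        exact h1
    _ = K := ENNReal.ofReal_coe_nnreal

lemma exp_le_affine {lam u : ℝ} (h0 : 0 ≤ u) (h1 : u ≤ 1) :
    Real.exp (lam * u) ≤ 1 + (Real.exp lam - 1) * u := by
  have h := convexOn_exp.2 (Set.mem_univ (0:ℝ)) (Set.mem_univ lam)
    (show (0:ℝ) ≤ 1 - u by linarith) h0 (by ring)
  simp only [smul_eq_mul, mul_zero, zero_add, Real.exp_zero, mul_one] at h
  calc Real.exp (lam * u) = Real.exp (u * lam) := by ring_nf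
    _ ≤ (1-u) + u * Real.exp lam := h
    _ = 1 + (Real.exp lam - 1) * u := by ring

lemma integrable_of_bdd {E : Type*} [MeasurableSpace E] {μ : Measure E} [IsFiniteMeasure μ]
    {f : E → ℝ} (hf : Measurable f) {C : ℝ} (h : ∀ x, |f x| ≤ C) : Integrable f μ :=
  (integrable_const C).mono' hf.aestronglyMeasurable (Eventually.of_forall fun x => by
    simpa [Real.norm_eq_abs] using h x)

/-- If a Markov semigroup satisfies the asymptotic log-Harnack inequality with
symmetric positive `Φ, Ψ_t` (`Ψ_t(x,y)` nonincreasing in `t`, tending to `0` as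
`t → ∞`), and `μ` is an invariant probability measure, then for every closed set `A`
with `μ(A) = 0` and every `x`, `P_t 1_A(x) = P_t(x,A) → 0` as `t → ∞`. -/
theorem asymptotic_irreducibility_null_closed_sets
    {E : Type*} [MetricSpace E] [MeasurableSpace E] [BorelSpace E]
    (P : ℝ → Kernel E E) (Φ : E → E → ℝ) (Ψ : ℝ → E → E → ℝ)
    (hP : IsMarkovSemigroup P)
    (hΦpos : ∀ x y, 0 < Φ x y) (hΦsymm : ∀ x y, Φ x y = Φ y x)
    (hΨpos : ∀ t, 0 < t → ∀ x y, 0 < Ψ t x y)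
    (hΨsymm : ∀ t x y, Ψ t x y = Ψ t y x)
    (hΨmono : ∀ x y s t, 0 < s → s ≤ t → Ψ t x y ≤ Ψ s x y)
    (hΨ0 : ∀ x y, Tendsto (fun t => Ψ t x y) atTop (𝓝 0))
    (hALH : AsymptoticLogHarnack P Φ Ψ)
    (μ : Measure E) [IsProbabilityMeasure μ] (hμ : IsInvariantMeasure P μ) :
    ∀ A : Set E, IsClosed A → μ A = 0 →
      ∀ x : E, Tendsto (fun t => (P t) x A) atTop (𝓝 (0 : ℝ≥0∞)) := by
  intro A hAclosed hA0 x
  rcases A.eq_empty_or_nonempty with rfl | hAne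
  · simpa using (tendsto_const_nhds : Tendsto (fun _ : ℝ => (0:ℝ≥0∞)) atTop _)
  have main : ∀ ε : ℝ, 0 < ε → ∀ᶠ t in atTop, ((P t) x A).toReal < ε := by
    intro ε hε
    by_contra hcon
    rw [Filter.not_eventually] at hcon
    -- extract a sequence of times
    have hseq : ∀ j : ℕ, ∃ b : ℝ, (j:ℝ)+1 ≤ b ∧ ε ≤ ((P b) x A).toReal := by
      intro j
      rcases frequently_atTop.1 hcon ((j:ℝ)+1) with ⟨b, hb1, hb2⟩
      exact ⟨b, hb1, not_lt.1 hb2⟩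
    choose s hs1 hs2 using hseq
    have hspos : ∀ j, 0 < s j := fun j => lt_of_lt_of_le (by positivity) (hs1 j)
    have hstend : Tendsto s atTop atTop :=
      tendsto_atTop_mono (fun j => le_trans (by simp) (hs1 j)) tendsto_natCast_atTop_atTop
    -- the neighborhoods
    set S : ℝ → Set E := fun d => {z | Metric.infDist z A ≤ d} with hSdef
    have hScl : ∀ d, IsClosed (S d) :=
      fun d => isClosed_le (Metric.lipschitz_infDist_pt (s := A)).continuous continuous_const
    have hSmono : ∀ {d d' : ℝ}, d ≤ d' → S d ⊆ S d' := fun hdd z hz => le_trans hz hdd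
    have hInter : ⋂ k : ℕ, S (1/((k:ℝ)+1)) = A := by
      ext z
      simp only [Set.mem_iInter, hSdef, Set.mem_setOf_eq]
      constructor
      · intro hz
        have h0 : Metric.infDist z A = 0 := by
          by_contra hne
          have hpos : 0 < Metric.infDist z A :=
            lt_of_le_of_ne Metric.infDist_nonneg (Ne.symm hne)
          obtain ⟨k, hk⟩ := exists_nat_gt (1 / Metric.infDist z A)
          have hk2 := hz k
          have : 1/((k:ℝ)+1) < Metric.infDist z A := by
            rw [div_lt_iff₀ (by positivity)]
            rw [div_lt_iff₀ hpos] at hk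
            nlinarith
          linarith
        have : z ∈ closure A := (Metric.mem_closure_iff_infDist_zero hAne).2 h0
        rwa [hAclosed.closure_eq] at this
      · intro hz k
        rw [Metric.infDist_zero_of_mem hz]
        positivity
    have htendS : Tendsto (fun k : ℕ => μ (S (1/((k:ℝ)+1)))) atTop (𝓝 0) := by
      have h := tendsto_measure_iInter_atTop (μ := μ) (s := fun k : ℕ => S (1/((k:ℝ)+1)))
        (fun k => (hScl _).measurableSet.nullMeasurableSet)
        (fun a b hab => hSmono (by
          apply one_div_le_one_div_of_le (by positivity)
          exact_mod_cast add_le_add_left (Nat.cast_le.2 hab) 1))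
        ⟨0, measure_ne_top _ _⟩
      rw [hInter, hA0] at h
      exact h
    -- choose radii
    have hδex : ∀ n : ℕ, ∃ d : ℝ, 0 < d ∧ μ (S d) < 2⁻¹ ^ n := by
      intro n
      have hpos : (0:ℝ≥0∞) < 2⁻¹ ^ n := by
        apply ENNReal.pow_pos
        simp
      obtain ⟨k, hk⟩ := (htendS.eventually_lt_const hpos).exists
      exact ⟨1/((k:ℝ)+1), by positivity, hk⟩
    choose δ0 hδ0pos hδ0μ using hδex
    set δ : ℕ → ℝ := fun n => Nat.rec (δ0 0) (fun m ih => min (δ0 (m+1)) ih) n with hδdef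
    have hδpos : ∀ n, 0 < δ n := by
      intro n
      induction n with
      | zero => exact hδ0pos 0
      | succ m ih => exact lt_min (hδ0pos _) ih
    have hδanti : ∀ n, δ (n+1) ≤ δ n := fun n => min_le_right _ _
    have hδle : ∀ n, δ n ≤ δ0 n := by
      intro n
      cases n with
      | zero => exact le_refl _
      | succ m => exact min_le_left _ _
    have hδμ : ∀ n, μ (S (δ n)) < 2⁻¹ ^ n :=
      fun n => lt_of_le_of_lt (measure_mono (hSmono (hδle n))) (hδ0μ n)
    -- the functions g n
    set g : ℕ → E → ℝ := fun n z => max (1 - Metric.infDist z A / δ n) 0 with hgdef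
    have hg0 : ∀ n z, 0 ≤ g n z := fun n z => le_max_right _ _
    have hg1 : ∀ n z, g n z ≤ 1 := fun n z => max_le (by
      have := Metric.infDist_nonneg (s := A) (x := z)
      have := hδpos n
      have : 0 ≤ Metric.infDist z A / δ n := by positivity
      linarith) zero_le_one
    have hglip : ∀ n, LipschitzWith ((δ n)⁻¹.toNNReal) (g n) := by
      intro n
      apply LipschitzWith.of_dist_le_mul
      intro z w
      have hd : |Metric.infDist z A - Metric.infDist w A| ≤ dist z w := by
        have h := (Metric.lipschitz_infDist_pt (s := A)).dist_le_mul z w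
        rwa [Real.dist_eq, NNReal.coe_one, one_mul] at h
      rw [Real.dist_eq]
      have habs : |g n z - g n w| ≤
          |(1 - Metric.infDist z A / δ n) - (1 - Metric.infDist w A / δ n)| :=
        abs_max_sub_max_le_abs _ _ _
      have he0 : (1 - Metric.infDist z A / δ n) - (1 - Metric.infDist w A / δ n) =
          (Metric.infDist w A - Metric.infDist z A) / δ n := by ring
      rw [he0, abs_div, abs_of_pos (hδpos n)] at habs
      refine le_trans habs ?_
      rw [Real.coe_toNNReal _ (inv_nonneg.2 (hδpos n).le), div_eq_inv_mul]
      refine mul_le_mul_of_nonneg_left ?_ (inv_nonneg.2 (hδpos n).le)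
      rw [abs_sub_comm]
      exact hd
    have hgcont : ∀ n, Continuous (g n) := fun n => (hglip n).continuous
    have hgmeas : ∀ n, Measurable (g n) := fun n => (hgcont n).measurable
    have hgA : ∀ n, ∀ z ∈ A, g n z = 1 := by
      intro n z hz
      simp [hgdef, Metric.infDist_zero_of_mem hz]
    have hganti : ∀ n z, g (n+1) z ≤ g n z := by
      intro n z
      apply max_le_max _ (le_refl _)
      apply sub_le_sub_left
      apply div_le_div_of_nonneg_left Metric.infDist_nonneg (hδpos (n+1)) (hδanti n)
    have hgind : ∀ n z, g n z ≤ (S (δ n)).indicator (fun _ => (1:ℝ)) z := by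
      intro n z
      by_cases hz : z ∈ S (δ n)
      · rw [Set.indicator_of_mem hz]; exact hg1 n z
      · rw [Set.indicator_of_notMem hz]
        have hz' : δ n < Metric.infDist z A := not_le.1 hz
        apply max_le _ (le_refl _)
        have : 1 < Metric.infDist z A / δ n := by
          rw [lt_div_iff₀ (hδpos n)]; linarith
        linarith
    have hgint : ∀ n (ν : Measure E) [IsProbabilityMeasure ν], Integrable (g n) ν := by
      intro n ν _
      exact integrable_of_bdd (hgmeas n) (C := 1) (fun z => by
        rw [abs_of_nonneg (hg0 n z)]; exact hg1 n z)
    have hgle : ∀ n (ν : Measure E) [IsProbabilityMeasure ν],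
        ∫ z, g n z ∂ν ≤ (ν (S (δ n))).toReal := by
      intro n ν _
      calc ∫ z, g n z ∂ν ≤ ∫ z, (S (δ n)).indicator (fun _ => (1:ℝ)) z ∂ν :=
            integral_mono (hgint n ν) ((integrable_const 1).indicator (hScl _).measurableSet)
              (hgind n)
        _ = (ν (S (δ n))).toReal := by
            rw [integral_indicator ((hScl _).measurableSet)]
            simp; rfl
    have hgge : ∀ n (ν : Measure E) [IsProbabilityMeasure ν],
        (ν A).toReal ≤ ∫ z, g n z ∂ν := by
      intro n ν _
      calc (ν A).toReal = ∫ z, A.indicator (fun _ => (1:ℝ)) z ∂ν := by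
            rw [integral_indicator hAclosed.measurableSet]; simp; rfl
        _ ≤ ∫ z, g n z ∂ν :=
            integral_mono ((integrable_const 1).indicator hAclosed.measurableSet) (hgint n ν)
              (fun z => by
                by_cases hz : z ∈ A
                · rw [Set.indicator_of_mem hz]; rw [hgA n z hz]
                · rw [Set.indicator_of_notMem hz]; exact hg0 n z)
    -- the key inequality from ALH
    have key : ∀ n : ℕ, ∀ lam : ℝ, 0 < lam → ∃ C : ℝ, 0 ≤ C ∧
        ∀ t : ℝ, 0 < t → ∀ y : E,
          lam * ((P t) x A).toReal ≤
            (Real.exp lam - 1) * (∫ z, g n z ∂(P t y)) + Φ x y + Ψ t x y * C := by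
      intro n lam hlam
      set f : E → ℝ := fun z => Real.exp (lam * g n z) with hfdef
      have hfm : Measurable f :=
        (Real.continuous_exp.comp (continuous_const.mul (hgcont n))).measurable
      have hfb : ∀ z, |f z| ≤ Real.exp lam := fun z => by
        rw [abs_of_pos (Real.exp_pos _)]
        apply Real.exp_le_exp.2
        nlinarith [hg1 n z, hg0 n z]
      have hfpos : ∀ z, 0 < f z := fun z => Real.exp_pos _
      have hf1 : ∀ z, 1 ≤ f z := fun z => by
        rw [hfdef]
        simpa using Real.one_le_exp (mul_nonneg hlam.le (hg0 n z))
      have hlogf : (fun z => Real.log (f z)) = fun z => lam * g n z := by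
        funext z; simp [hfdef, Real.log_exp]
      have hliplam : LipschitzWith (lam.toNNReal * (δ n)⁻¹.toNNReal) (fun z => lam * g n z) := by
        apply LipschitzWith.of_dist_le_mul
        intro z w
        rw [Real.dist_eq]
        have h1 : |lam * g n z - lam * g n w| = |lam| * |g n z - g n w| := by
          rw [← abs_mul]; congr 1; ring
        rw [h1]
        have h2 := (hglip n).dist_le_mul z w
        rw [Real.dist_eq] at h2
        rw [abs_of_pos hlam]
        push_cast
        rw [Real.coe_toNNReal _ hlam.le]
        calc lam * |g n z - g n w| ≤ lam * (((δ n)⁻¹.toNNReal : ℝ) * dist z w) :=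
              mul_le_mul_of_nonneg_left h2 hlam.le
          _ = lam * ((δ n)⁻¹.toNNReal : ℝ) * dist z w := by ring
      have hKne : localSlopeSup (fun z => Real.log (f z)) ≠ ⊤ := by
        rw [hlogf]
        exact ne_top_of_le_ne_top coe_ne_top (localSlopeSup_le_of_lipschitz hliplam)
      refine ⟨(localSlopeSup (fun z => Real.log (f z))).toReal, ENNReal.toReal_nonneg, ?_⟩
      intro t ht y
      haveI := hP.1 t ht.le
      have hALHt := hALH t ht f hfm ⟨Real.exp lam, hfb⟩ hfpos hKne x y
      have hLHS : lam * ((P t) x A).toReal ≤ ∫ z, Real.log (f z) ∂(P t x) := by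
        rw [hlogf, integral_const_mul]
        exact mul_le_mul_of_nonneg_left (hgge n ((P t) x)) hlam.le
      have hgy0 : 0 ≤ ∫ z, g n z ∂(P t y) := integral_nonneg (hg0 n)
      have hc0 : 0 ≤ Real.exp lam - 1 := by nlinarith [Real.add_one_lt_exp (ne_of_gt hlam)]
      have hRHS : Real.log (∫ z, f z ∂(P t y)) ≤
          (Real.exp lam - 1) * ∫ z, g n z ∂(P t y) := by
        have hfint : Integrable f ((P t) y) := integrable_of_bdd hfm hfb
        have hle : ∫ z, f z ∂(P t y) ≤ 1 + (Real.exp lam - 1) * ∫ z, g n z ∂(P t y) := by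
          calc ∫ z, f z ∂(P t y)
              ≤ ∫ z, (1 + (Real.exp lam - 1) * g n z) ∂(P t y) :=
                integral_mono hfint ((integrable_const 1).add ((hgint n _).const_mul _))
                  (fun z => exp_le_affine (hg0 n z) (hg1 n z))
            _ = 1 + (Real.exp lam - 1) * ∫ z, g n z ∂(P t y) := by
                rw [integral_add (integrable_const 1) ((hgint n _).const_mul _),
                  integral_const_mul]
                simp
        have hfpos' : (0:ℝ) < ∫ z, f z ∂(P t y) := by
          have h1 : (1:ℝ) = ∫ _z, (1:ℝ) ∂(P t y) := by simp
          calc (0:ℝ) < 1 := one_pos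
            _ = ∫ _z, (1:ℝ) ∂(P t y) := h1
            _ ≤ ∫ z, f z ∂(P t y) := integral_mono (integrable_const 1) hfint hf1
        calc Real.log (∫ z, f z ∂(P t y))
            ≤ Real.log (1 + (Real.exp lam - 1) * ∫ z, g n z ∂(P t y)) :=
              Real.log_le_log hfpos' hle
          _ ≤ (Real.exp lam - 1) * ∫ z, g n z ∂(P t y) := by
              have hpos : (0:ℝ) < 1 + (Real.exp lam - 1) * ∫ z, g n z ∂(P t y) := by positivity
              have := Real.log_le_sub_one_of_pos hpos
              linarith
      linarith
    -- measurability of kernel integrals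
    have hFmeas : ∀ (n : ℕ) (t : ℝ), 0 ≤ t → Measurable fun y => ∫ z, g n z ∂(P t y) := by
      intro n t ht
      haveI := hP.1 t ht
      have : StronglyMeasurable (Function.uncurry (fun (_ : E) z => g n z)) :=
        ((hgmeas n).comp measurable_snd).stronglyMeasurable
      exact (MeasureTheory.StronglyMeasurable.integral_kernel_prod_right this).measurable
    -- the liminf functions
    set q : ℕ → ℕ → E → ℝ≥0∞ :=
      fun n j y => ENNReal.ofReal (∫ z, g n z ∂(P (s j) y)) with hqdef
    have hqmeas : ∀ n j, Measurable (q n j) :=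
      fun n j => ENNReal.measurable_ofReal.comp (hFmeas n (s j) (hspos j).le)
    have hqle : ∀ n j, ∫⁻ y, q n j y ∂μ ≤ 2⁻¹ ^ n := by
      intro n j
      haveI := hP.1 (s j) (hspos j).le
      have hFb : ∀ y, |∫ z, g n z ∂(P (s j) y)| ≤ 1 := by
        intro y
        rw [abs_of_nonneg (integral_nonneg (hg0 n))]
        calc ∫ z, g n z ∂(P (s j) y) ≤ ∫ _z, (1:ℝ) ∂(P (s j) y) :=
              integral_mono (hgint n _) (integrable_const 1) (hg1 n)
          _ = 1 := by simp
      have hint : Integrable (fun y => ∫ z, g n z ∂(P (s j) y)) μ :=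
        integrable_of_bdd (hFmeas n _ (hspos j).le) hFb
      rw [hqdef]
      rw [← MeasureTheory.ofReal_integral_eq_lintegral_ofReal hint
        (Eventually.of_forall fun y => integral_nonneg (hg0 n))]
      rw [hμ (s j) (hspos j).le (g n) (hgmeas n)
        ⟨1, fun z => by rw [abs_of_nonneg (hg0 n z)]; exact hg1 n z⟩]
      calc ENNReal.ofReal (∫ z, g n z ∂μ)
          ≤ ENNReal.ofReal ((μ (S (δ n))).toReal) := ENNReal.ofReal_le_ofReal (hgle n μ)
        _ = μ (S (δ n)) := ENNReal.ofReal_toReal (measure_ne_top μ _)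
        _ ≤ 2⁻¹ ^ n := (hδμ n).le
    set h : ℕ → E → ℝ≥0∞ := fun n y => Filter.liminf (fun j => q n j y) atTop with hhdef
    have hhmeas : ∀ n, Measurable (h n) := fun n => Measurable.liminf (fun j => hqmeas n j)
    have hhle : ∀ n, ∫⁻ y, h n y ∂μ ≤ 2⁻¹ ^ n := by
      intro n
      calc ∫⁻ y, h n y ∂μ ≤ liminf (fun j => ∫⁻ y, q n j y ∂μ) atTop :=
            lintegral_liminf_le (hqmeas n)
        _ ≤ 2⁻¹ ^ n :=
            Filter.liminf_le_of_frequently_le' (Filter.Frequently.of_forall (hqle n))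
    have hhanti : ∀ y, Antitone (fun n => h n y) := by
      intro y
      apply antitone_nat_of_succ_le
      intro n
      refine Filter.liminf_le_liminf (Eventually.of_forall fun j => ?_)
        (isBoundedUnder_of ⟨0, fun j => zero_le⟩)
        ((isBoundedUnder_of ⟨⊤, fun j => le_top⟩ : IsBoundedUnder (· ≤ ·) atTop
          (fun j => q n j y)).isCoboundedUnder_ge)
      apply ENNReal.ofReal_le_ofReal
      haveI := hP.1 (s j) (hspos j).le
      exact integral_mono (hgint (n+1) _) (hgint n _) (hganti n)
    -- find a good point y
    have hμne : (μ : Measure E) ≠ 0 := IsProbabilityMeasure.ne_zero μ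
    have hHmeas : Measurable (fun y => ⨅ n, h n y) := Measurable.iInf hhmeas
    have hH0 : ∫⁻ y, ⨅ n, h n y ∂μ = 0 := by
      by_contra h0
      obtain ⟨n, hn⟩ := ENNReal.exists_inv_two_pow_lt h0
      have : ∫⁻ y, ⨅ m, h m y ∂μ ≤ 2⁻¹ ^ n :=
        le_trans (lintegral_mono (fun y => iInf_le _ n)) (hhle n)
      exact absurd (lt_of_lt_of_le hn this) (lt_irrefl _)
    have hae : ∀ᵐ y ∂μ, (⨅ n, h n y) = 0 := by
      have := (lintegral_eq_zero_iff hHmeas).1 hH0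
      filter_upwards [this] with y hy using hy
    haveI : (ae μ).NeBot := ae_neBot.2 hμne
    obtain ⟨y, hy⟩ := hae.exists
    have hconv : Tendsto (fun n => h n y) atTop (𝓝 0) := by
      have := tendsto_atTop_iInf (hhanti y)
      rwa [hy] at this
    -- the numeric contradiction
    set K := Φ x y with hKdef
    have hKpos : 0 < K := hΦpos x y
    set lam : ℝ := 2*K/ε + 1 with hlamdef
    have hlam : 0 < lam := by positivity
    have hc : 0 < Real.exp lam - 1 := by nlinarith [Real.add_one_lt_exp (ne_of_gt hlam)]
    set ρ : ℝ := lam * ε / (8 * (Real.exp lam - 1)) with hρdef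
    have hρ : 0 < ρ := by positivity
    obtain ⟨n, hn⟩ :=
      (hconv.eventually_lt_const (show (0:ℝ≥0∞) < ENNReal.ofReal ρ from ENNReal.ofReal_pos.2 hρ)).exists
    obtain ⟨C, hC0, hkey⟩ := key n lam hlam
    have hfreq : ∃ᶠ j in atTop, q n j y < ENNReal.ofReal ρ :=
      Filter.frequently_lt_of_liminf_lt (by isBoundedDefault) hn
    have hΨy : Tendsto (fun j => Ψ (s j) x y) atTop (𝓝 0) := (hΨ0 x y).comp hstend
    have hΨev : ∀ᶠ j in atTop, Ψ (s j) x y * C < lam * ε / 8 := by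
      have h2 : Tendsto (fun j => Ψ (s j) x y * C) atTop (𝓝 0) := by
        simpa using hΨy.mul_const C
      exact h2.eventually_lt_const (by positivity)
    obtain ⟨j, hj1, hj2⟩ := (hfreq.and_eventually hΨev).exists
    have hm : ∫ z, g n z ∂(P (s j) y) < ρ := by
      rw [hqdef] at hj1
      exact (ENNReal.ofReal_lt_ofReal_iff hρ).1 hj1
    have hineq := hkey (s j) (hspos j) y
    rw [← hKdef] at hineq
    have hεP : ε ≤ ((P (s j)) x A).toReal := hs2 j
    have hgnn : 0 ≤ ∫ z, g n z ∂(P (s j) y) := by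
      haveI := hP.1 (s j) (hspos j).le
      exact integral_nonneg (hg0 n)
    have h1 : lam * ε ≤ lam * ((P (s j)) x A).toReal := mul_le_mul_of_nonneg_left hεP hlam.le
    have h2 : (Real.exp lam - 1) * (∫ z, g n z ∂(P (s j) y)) < lam * ε / 8 := by
      calc (Real.exp lam - 1) * (∫ z, g n z ∂(P (s j) y))
          < (Real.exp lam - 1) * ρ := mul_lt_mul_of_pos_left hm hc
        _ = lam * ε / 8 := by
            rw [hρdef]; field_simp
    have hK2 : K < lam * ε / 2 := by
      have hle : lam * ε = 2*K + ε := by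
        rw [hlamdef]; field_simp
      nlinarith
    have hlε : 0 < lam * ε := mul_pos hlam hε
    clear_value K lam ρ
    linarith [hineq, h1, h2, hj2, hK2, hlε]
  -- convert to the ENNReal statement
  have htR : Tendsto (fun t => ((P t) x A).toReal) atTop (𝓝 0) := by
    rw [NormedAddCommGroup.tendsto_nhds_zero]
    intro ε hε
    filter_upwards [main ε hε] with t ht
    rwa [Real.norm_eq_abs, abs_of_nonneg ENNReal.toReal_nonneg]
  have hofreal : ∀ᶠ t in (atTop : Filter ℝ),
      ENNReal.ofReal (((P t) x A).toReal) = (P t) x A := by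
    filter_upwards [eventually_ge_atTop (0:ℝ)] with t ht
    haveI := hP.1 t ht
    exact ENNReal.ofReal_toReal (measure_ne_top _ _)
  have hfin : Tendsto (fun t => ENNReal.ofReal (((P t) x A).toReal)) atTop (𝓝 0) := by
    have := ENNReal.tendsto_ofReal htR
    simpa using this
  exact hfin.congr' hofreal
end

section
/- Suppose the Markov semigroup (P_t)_{t≥0} on the metric space (E,ρ) satisfies the asymptotic log-Harnack inequality with some symmetric functions Φ, Ψ_t : E×E → (0,∞), where Ψ_t(x,y) is nonincreasing in t and tends to 0 as t → ∞ for each pair (x,y). Fix x ∈ E and assume Λ(x) := limsup_{y→x} Φ(x,y)/ρ(x,y)² < ∞ and Γ_t(x) := limsup_{y→x} Ψ_t(x,y)/ρ(x,y) < ∞ for each t > 0. Then for every t > 0 and every f ∈ Lip(E), the local slope of P_t f at x satisfies |∇P_t f|(x) ≤ √(2Λ(x)) · √( P_t(f²)(x) − (P_t f(x))² ) + ‖∇f‖_∞ · Γ_t(x). -/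
open MeasureTheory ProbabilityTheory Filter Topology ENNReal

lemma my_exp_cubic_bound {u : ℝ} (hu : |u| ≤ 1) :
    Real.exp u ≤ 1 + u + u^2/2 + 2/9*|u|^3 := by
  have h := Real.exp_bound hu (n := 3) (by norm_num)
  have hs : ∑ m ∈ Finset.range 3, u ^ m / (Nat.factorial m) = 1 + u + u^2/2 := by
    simp [Finset.sum_range_succ, Nat.factorial]
  rw [hs] at h
  norm_num [Nat.factorial] at h
  have := (abs_le.mp h).2
  linarith

lemma my_limsup_add_le {α : Type*} {f : Filter α} (u v : α → ℝ≥0∞) :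
    limsup (fun x => u x + v x) f ≤ limsup u f + limsup v f := by
  refine ENNReal.le_of_forall_pos_le_add fun ε hε hlt => ?_
  have hu : limsup u f ≠ ⊤ := fun h => by simp [h] at hlt
  have hv : limsup v f ≠ ⊤ := fun h => by simp [h] at hlt
  have hε2 : (0:ℝ≥0∞) < (ε:ℝ≥0∞)/2 := by
    simp [ENNReal.div_pos_iff, hε.ne']
  have h1 : ∀ᶠ x in f, u x < limsup u f + (ε:ℝ≥0∞)/2 :=
    Filter.eventually_lt_of_limsup_lt (ENNReal.lt_add_right hu hε2.ne')
  have h2 : ∀ᶠ x in f, v x < limsup v f + (ε:ℝ≥0∞)/2 :=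
    Filter.eventually_lt_of_limsup_lt (ENNReal.lt_add_right hv hε2.ne')
  have : ∀ᶠ x in f, u x + v x ≤ limsup u f + limsup v f + ε := by
    filter_upwards [h1, h2] with x hx1 hx2
    calc u x + v x ≤ (limsup u f + (ε:ℝ≥0∞)/2) + (limsup v f + (ε:ℝ≥0∞)/2) :=
          add_le_add hx1.le hx2.le
      _ = limsup u f + limsup v f + ((ε:ℝ≥0∞)/2 + (ε:ℝ≥0∞)/2) := by ring
      _ = limsup u f + limsup v f + ε := by rw [ENNReal.add_halves]
  exact Filter.limsup_le_of_le (by isBoundedDefault) this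

lemma my_localSlope_affine {E : Type*} [MetricSpace E] (f : E → ℝ) (a b : ℝ) (z : E) :
    localSlope (fun w => a * f w + b) z = ENNReal.ofReal |a| * localSlope f z := by
  unfold localSlope
  rw [← ENNReal.limsup_const_mul_of_ne_top ENNReal.ofReal_ne_top]
  congr 1
  funext y
  rw [← ENNReal.ofReal_mul (abs_nonneg a)]
  congr 1
  have h : |(a * f z + b) - (a * f y + b)| = |a| * |f z - f y| := by
    rw [← abs_mul]; ring_nf
  rw [h, mul_div_assoc]

lemma my_localSlopeSup_affine {E : Type*} [MetricSpace E] (f : E → ℝ) (a b : ℝ) :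
    localSlopeSup (fun w => a * f w + b) = ENNReal.ofReal |a| * localSlopeSup f := by
  unfold localSlopeSup
  rw [ENNReal.mul_iSup]
  exact iSup_congr fun z => my_localSlope_affine f a b z
set_option maxHeartbeats 2000000 in
/-- If a Markov semigroup satisfies the asymptotic log-Harnack inequality with
symmetric positive `Φ, Ψ_t` (`Ψ_t(x,y)` nonincreasing in `t`, tending to `0` as
`t → ∞`), and at a point `x` both `Λ(x) = limsup_{y→x} Φ(x,y)/ρ(x,y)²` and
`Γ_t(x) = limsup_{y→x} Ψ_t(x,y)/ρ(x,y)` are finite, then for all `t > 0` and bounded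
Lipschitz `f`,
`|∇P_t f|(x) ≤ √(2Λ(x)) √(P_t f²(x) − (P_t f(x))²) + ‖∇f‖_∞ Γ_t(x)`. -/
theorem asymptotic_gradient_estimate
    {E : Type*} [MetricSpace E] [MeasurableSpace E] [BorelSpace E]
    (P : ℝ → Kernel E E) (Φ : E → E → ℝ) (Ψ : ℝ → E → E → ℝ)
    (hP : IsMarkovSemigroup P)
    (hΦpos : ∀ x y, 0 < Φ x y) (hΦsymm : ∀ x y, Φ x y = Φ y x)
    (hΨpos : ∀ t, 0 < t → ∀ x y, 0 < Ψ t x y)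
    (hΨsymm : ∀ t x y, Ψ t x y = Ψ t y x)
    (hΨmono : ∀ x y s t, 0 < s → s ≤ t → Ψ t x y ≤ Ψ s x y)
    (hΨ0 : ∀ x y, Tendsto (fun t => Ψ t x y) atTop (𝓝 0))
    (hALH : AsymptoticLogHarnack P Φ Ψ)
    (x : E)
    (hΛ : Filter.limsup
        (fun y => ENNReal.ofReal (Φ x y / (dist x y) ^ 2)) (𝓝[≠] x) ≠ ⊤)
    (hΓ : ∀ t, 0 < t →
      Filter.limsup (fun y => ENNReal.ofReal (Ψ t x y / dist x y)) (𝓝[≠] x) ≠ ⊤) :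
    ∀ t, 0 < t → ∀ f : E → ℝ, Measurable f → (∃ C, ∀ z, |f z| ≤ C) →
      localSlopeSup f ≠ ⊤ →
      localSlope (fun z => ∫ w, f w ∂(P t z)) x ≤
        ENNReal.ofReal
          (Real.sqrt (2 * (Filter.limsup
              (fun y => ENNReal.ofReal (Φ x y / (dist x y) ^ 2)) (𝓝[≠] x)).toReal) *
            Real.sqrt ((∫ w, (f w) ^ 2 ∂(P t x)) - (∫ w, f w ∂(P t x)) ^ 2)) +
        localSlopeSup f *
          Filter.limsup (fun y => ENNReal.ofReal (Ψ t x y / dist x y)) (𝓝[≠] x) := by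
  intro t ht f hfm hfb hL
  obtain ⟨C, hC⟩ := hfb
  haveI hmk := hP.1 t ht.le
  -- degenerate case: isolated point
  rcases (𝓝[≠] x).eq_or_neBot with hbot | hne
  · unfold localSlope
    rw [hbot, Filter.limsup_bot]
    exact zero_le
  set LamE := Filter.limsup (fun y => ENNReal.ofReal (Φ x y / (dist x y) ^ 2)) (𝓝[≠] x)
    with hLamE
  set GamE := Filter.limsup (fun y => ENNReal.ofReal (Ψ t x y / dist x y)) (𝓝[≠] x)
    with hGamE
  set V := (∫ w, (f w) ^ 2 ∂(P t x)) - (∫ w, f w ∂(P t x)) ^ 2 with hVdef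
  set L := localSlopeSup f with hLdef
  have hC0 : 0 ≤ C := (abs_nonneg _).trans (hC x)
  -- integrability helper
  have hint : ∀ (g : E → ℝ) (D : ℝ), Measurable g → (∀ z, |g z| ≤ D) →
      ∀ y : E, Integrable g ((P t) y) := fun g D hg hD y =>
    (integrable_const D).mono' hg.aestronglyMeasurable
      (ae_of_all _ fun z => by simpa [Real.norm_eq_abs] using hD z)
  -- variance identity
  have hVar : ∀ (g : E → ℝ), Measurable g → (∀ z, |g z| ≤ C) →
      ∫ w, (g w - ∫ v, g v ∂(P t x)) ^ 2 ∂(P t x)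
        = (∫ w, (g w) ^ 2 ∂(P t x)) - (∫ v, g v ∂(P t x)) ^ 2 := by
    intro g hg hgC
    set m := ∫ v, g v ∂(P t x) with hm
    have hig : Integrable g ((P t) x) := hint g C hg hgC x
    have hig2 : Integrable (fun w => (g w) ^ 2) ((P t) x) := by
      refine hint _ (C ^ 2) (hg.pow_const 2) (fun z => ?_) x
      rw [abs_pow]
      exact pow_le_pow_left₀ (abs_nonneg _) (hgC z) 2
    have iA : Integrable (fun w => (g w) ^ 2 - (2 * m) * g w) ((P t) x) :=
      hig2.sub (hig.const_mul (2 * m))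
    have hexp : (fun w => (g w - m) ^ 2)
        = fun w => ((g w) ^ 2 - (2 * m) * g w) + m ^ 2 := by
      funext w; ring
    rw [hexp, integral_add iA (integrable_const _),
      integral_sub hig2 (hig.const_mul (2 * m)), integral_const_mul, integral_const]
    simp [measure_univ, ← hm]
    ring
  have hVnn : 0 ≤ V := by
    rw [hVdef, ← hVar f hfm hC]
    exact integral_nonneg fun w => sq_nonneg _
  -- the key one-sided eventual estimate
  have key : ∀ (g : E → ℝ), Measurable g → (∀ z, |g z| ≤ C) → localSlopeSup g = L →
      ((∫ w, (g w) ^ 2 ∂(P t x)) - (∫ w, g w ∂(P t x)) ^ 2 = V) →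
      ∀ c : ℝ, 0 < c → ∀ᶠ y in 𝓝[≠] x,
        ((∫ w, g w ∂(P t y)) - ∫ w, g w ∂(P t x)) / dist x y ≤
          (c / 2 * V + 2 / 9 * c ^ 2 * (2 * C) ^ 3 * dist x y)
            + (1 / c) * (Φ x y / (dist x y) ^ 2)
            + L.toReal * (Ψ t x y / dist x y) := by
    intro g hg hgC hgL hgV c hc
    set mg := ∫ v, g v ∂(P t x) with hmg
    have hmgC : |mg| ≤ C := by
      have := norm_integral_le_of_norm_le_const
        (μ := (P t) x) (f := g) (C := C) (ae_of_all _ fun z => by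
          simpa [Real.norm_eq_abs] using hgC z)
      simpa [Real.norm_eq_abs, measure_univ] using this
    have hgtC : ∀ z, |g z - mg| ≤ 2 * C := fun z => by
      have h1 := abs_add_le (g z) (-mg)
      rw [abs_neg] at h1
      have := hgC z
      have := hmgC
      simp only [← sub_eq_add_neg] at h1
      linarith
    have hVarg : ∫ w, (g w - mg) ^ 2 ∂(P t x)
        = (∫ w, (g w) ^ 2 ∂(P t x)) - mg ^ 2 := hVar g hg hgC
    set δ := min 1 (1 / (c * (2 * C) + 1)) with hδdef
    have hδ : 0 < δ := lt_min one_pos (by positivity)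
    have hev : ∀ᶠ y in 𝓝[≠] x, dist x y < δ := by
      have h : ∀ᶠ y in 𝓝 x, dist x y < δ := by
        filter_upwards [Metric.ball_mem_nhds x hδ] with y hy
        rwa [Metric.mem_ball, dist_comm] at hy
      exact h.filter_mono nhdsWithin_le_nhds
    filter_upwards [hev, self_mem_nhdsWithin] with y hyδ hyx
    have hxy : x ≠ y := fun h => hyx (by simp [h])
    have hρ : 0 < dist x y := dist_pos.mpr hxy
    set ρ := dist x y with hρdef
    set s := c * ρ with hsdef
    have hs : 0 < s := mul_pos hc hρ
    have hs1 : s * (2 * C) ≤ 1 := by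
      have hδ2 : δ ≤ 1 / (c * (2 * C) + 1) := min_le_right _ _
      have h1 : ρ ≤ 1 / (c * (2 * C) + 1) := (hyδ.trans_le hδ2).le
      have h2 : (0:ℝ) < c * (2 * C) + 1 := by positivity
      calc s * (2 * C) = (c * (2 * C)) * ρ := by rw [hsdef]; ring
        _ ≤ (c * (2 * C)) * (1 / (c * (2 * C) + 1)) :=
            mul_le_mul_of_nonneg_left h1 (by positivity)
        _ ≤ 1 := by rw [mul_one_div, div_le_one h2]; linarith
    have husmall : ∀ z, |s * (g z - mg)| ≤ 1 := fun z => by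
      rw [abs_mul, abs_of_pos hs]
      calc s * |g z - mg| ≤ s * (2 * C) :=
            mul_le_mul_of_nonneg_left (hgtC z) hs.le
        _ ≤ 1 := hs1
    set F : E → ℝ := fun z => Real.exp (s * (g z - mg)) with hF
    have hFm : Measurable F :=
      Real.measurable_exp.comp ((hg.sub measurable_const).const_mul s)
    have hFb : ∀ z, |F z| ≤ Real.exp 1 := fun z => by
      rw [hF, abs_of_pos (Real.exp_pos _)]
      exact Real.exp_le_exp.mpr ((le_abs_self _).trans (husmall z))
    have hFpos : ∀ z, 0 < F z := fun z => Real.exp_pos _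
    have hlogF : (fun z => Real.log (F z)) = fun z => s * g z + (-(s * mg)) :=
      funext fun z => by rw [hF]; simp only [Real.log_exp]; ring
    have hslopeF : localSlopeSup (fun z => Real.log (F z)) = ENNReal.ofReal s * L := by
      rw [hlogF, my_localSlopeSup_affine, hgL, abs_of_pos hs]
    have hslopeF' : localSlopeSup (fun z => Real.log (F z)) ≠ ⊤ := by
      rw [hslopeF]
      exact ENNReal.mul_ne_top ENNReal.ofReal_ne_top hL
    have H := hALH t ht F hFm ⟨Real.exp 1, hFb⟩ hFpos hslopeF' y x
    rw [hslopeF, hΦsymm y x, hΨsymm t y x] at H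
    have htoReal : (ENNReal.ofReal s * L).toReal = s * L.toReal := by
      rw [ENNReal.toReal_mul, ENNReal.toReal_ofReal hs.le]
    rw [htoReal] at H
    have i1 : Integrable (fun z => g z - mg) ((P t) x) :=
      (hint g C hg hgC x).sub (integrable_const _)
    have hg2int : Integrable (fun w => (g w - mg) ^ 2) ((P t) x) := by
      refine hint _ ((2 * C) ^ 2) ((hg.sub measurable_const).pow_const 2) (fun z => ?_) x
      rw [abs_pow]
      exact pow_le_pow_left₀ (abs_nonneg _) (hgtC z) 2
    have hLHS : ∫ z, Real.log (F z) ∂(P t y) = s * ((∫ w, g w ∂(P t y)) - mg) := by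
      have iB : Integrable (fun z => s * g z) ((P t) y) := (hint g C hg hgC y).const_mul s
      rw [hlogF, integral_add iB (integrable_const _), integral_const_mul, integral_const]
      simp [measure_univ]
      ring
    have hmean0 : ∫ z, (g z - mg) ∂(P t x) = 0 := by
      rw [integral_sub (hint g C hg hgC x) (integrable_const _), integral_const]
      simp [measure_univ, ← hmg]
    have hFle : ∫ z, F z ∂(P t x)
        ≤ 1 + (s ^ 2 / 2 * ((∫ w, (g w) ^ 2 ∂(P t x)) - mg ^ 2)
            + 2 / 9 * s ^ 3 * (2 * C) ^ 3) := by
      have hpt : ∀ z, F z ≤ 1 + s * (g z - mg) + s ^ 2 * (g z - mg) ^ 2 / 2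
          + 2 / 9 * s ^ 3 * (2 * C) ^ 3 := fun z => by
        have h1 := my_exp_cubic_bound (husmall z)
        have h2 : |s * (g z - mg)| ^ 3 ≤ s ^ 3 * (2 * C) ^ 3 := by
          rw [abs_mul, abs_of_pos hs, mul_pow]
          exact mul_le_mul_of_nonneg_left
            (pow_le_pow_left₀ (abs_nonneg _) (hgtC z) 3) (by positivity)
        have h3 : (2:ℝ) / 9 * |s * (g z - mg)| ^ 3 ≤ 2 / 9 * (s ^ 3 * (2 * C) ^ 3) :=
          mul_le_mul_of_nonneg_left h2 (by norm_num)
        rw [hF]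
        nlinarith [h1, h3]
      have iC : Integrable (fun z => s * (g z - mg)) ((P t) x) := i1.const_mul s
      have iD : Integrable (fun z => s ^ 2 * (g z - mg) ^ 2 / 2) ((P t) x) :=
        (hg2int.const_mul (s ^ 2)).div_const 2
      have iE : Integrable (fun z => 1 + s * (g z - mg)) ((P t) x) :=
        (integrable_const (1:ℝ)).add iC
      have iF : Integrable (fun z => 1 + s * (g z - mg) + s ^ 2 * (g z - mg) ^ 2 / 2)
          ((P t) x) := iE.add iD
      have hRHSint : Integrable (fun z => 1 + s * (g z - mg) + s ^ 2 * (g z - mg) ^ 2 / 2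
          + 2 / 9 * s ^ 3 * (2 * C) ^ 3) ((P t) x) := iF.add (integrable_const _)
      calc ∫ z, F z ∂(P t x)
          ≤ ∫ z, (1 + s * (g z - mg) + s ^ 2 * (g z - mg) ^ 2 / 2
              + 2 / 9 * s ^ 3 * (2 * C) ^ 3) ∂(P t x) :=
            integral_mono (hint F (Real.exp 1) hFm hFb x) hRHSint hpt
        _ = 1 + (s ^ 2 / 2 * ((∫ w, (g w) ^ 2 ∂(P t x)) - mg ^ 2)
              + 2 / 9 * s ^ 3 * (2 * C) ^ 3) := by
            rw [integral_add iF (integrable_const _), integral_add iE iD,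
              integral_add (integrable_const (1:ℝ)) iC,
              integral_const, integral_const, integral_div, integral_const_mul,
              integral_const_mul, hmean0, hVarg]
            simp [measure_univ]
            ring
    have hIpos : 0 < ∫ z, F z ∂(P t x) := by
      have hle : ∀ z, Real.exp (-1) ≤ F z := fun z => by
        rw [hF]
        exact Real.exp_le_exp.mpr (neg_le_of_abs_le (husmall z))
      calc (0:ℝ) < Real.exp (-1) := Real.exp_pos _
        _ = ∫ _z, Real.exp (-1) ∂(P t x) := by simp [measure_univ]
        _ ≤ ∫ z, F z ∂(P t x) :=
            integral_mono (integrable_const _) (hint F (Real.exp 1) hFm hFb x) hle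
    have hlog : Real.log (∫ z, F z ∂(P t x))
        ≤ s ^ 2 / 2 * V + 2 / 9 * s ^ 3 * (2 * C) ^ 3 := by
      have h := Real.log_le_sub_one_of_pos hIpos
      rw [← hgV]
      linarith [hFle]
    rw [hLHS] at H
    rw [div_le_iff₀ hρ]
    have hGexp : s * (((c / 2 * V + 2 / 9 * c ^ 2 * (2 * C) ^ 3 * ρ)
          + (1 / c) * (Φ x y / ρ ^ 2) + L.toReal * (Ψ t x y / ρ)) * ρ)
        = s ^ 2 / 2 * V + 2 / 9 * s ^ 3 * (2 * C) ^ 3 + Φ x y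
          + Ψ t x y * (s * L.toReal) := by
      rw [hsdef]
      field_simp
    have hfinal : s * ((∫ w, g w ∂(P t y)) - mg)
        ≤ s * (((c / 2 * V + 2 / 9 * c ^ 2 * (2 * C) ^ 3 * ρ)
            + (1 / c) * (Φ x y / ρ ^ 2) + L.toReal * (Ψ t x y / ρ)) * ρ) := by
      rw [hGexp]
      linarith [H, hlog]
    exact le_of_mul_le_mul_left hfinal hs
  have hmain : ∀ c : ℝ, 0 < c →
      localSlope (fun z => ∫ w, f w ∂(P t z)) x ≤
        ENNReal.ofReal (c / 2 * V) + (ENNReal.ofReal (1 / c) * LamE + L * GamE) := by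
    intro c hc
    have keyf := key f hfm hC hLdef.symm hVdef.symm c hc
    have keynf := key (fun z => -f z) hfm.neg
      (fun z => by
        show |(-f z)| ≤ C
        rw [abs_neg]; exact hC z)
      (by
        have e : (fun z => -f z) = fun z => (-1 : ℝ) * f z + 0 := by funext z; ring
        rw [e, my_localSlopeSup_affine, ← hLdef]
        norm_num)
      (by
        simp only [integral_neg, neg_sq]; exact hVdef.symm) c hc
    have habs : ∀ᶠ y in 𝓝[≠] x,
        ENNReal.ofReal (|(∫ w, f w ∂(P t x)) - ∫ w, f w ∂(P t y)| / dist x y) ≤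
          ENNReal.ofReal (c / 2 * V + 2 / 9 * c ^ 2 * (2 * C) ^ 3 * dist x y)
            + (ENNReal.ofReal (1 / c) * ENNReal.ofReal (Φ x y / (dist x y) ^ 2)
              + L * ENNReal.ofReal (Ψ t x y / dist x y)) := by
      filter_upwards [keyf, keynf, self_mem_nhdsWithin] with y h1 h2 hyx
      have hxy : x ≠ y := fun h => hyx (by simp [h])
      have hρ : 0 < dist x y := dist_pos.mpr hxy
      simp only [integral_neg] at h2
      rw [div_le_iff₀ hρ] at h1 h2
      have habs0 : |(∫ w, f w ∂(P t x)) - ∫ w, f w ∂(P t y)| / dist x y ≤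
          c / 2 * V + 2 / 9 * c ^ 2 * (2 * C) ^ 3 * dist x y
            + (1 / c) * (Φ x y / (dist x y) ^ 2) + L.toReal * (Ψ t x y / dist x y) := by
        rw [div_le_iff₀ hρ, abs_le]
        constructor
        · linarith
        · linarith
      calc ENNReal.ofReal (|(∫ w, f w ∂(P t x)) - ∫ w, f w ∂(P t y)| / dist x y)
          ≤ ENNReal.ofReal (c / 2 * V + 2 / 9 * c ^ 2 * (2 * C) ^ 3 * dist x y
              + (1 / c) * (Φ x y / (dist x y) ^ 2) + L.toReal * (Ψ t x y / dist x y)) :=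
            ENNReal.ofReal_le_ofReal habs0
        _ ≤ ENNReal.ofReal (c / 2 * V + 2 / 9 * c ^ 2 * (2 * C) ^ 3 * dist x y
              + (1 / c) * (Φ x y / (dist x y) ^ 2))
            + ENNReal.ofReal (L.toReal * (Ψ t x y / dist x y)) := ENNReal.ofReal_add_le
        _ ≤ (ENNReal.ofReal (c / 2 * V + 2 / 9 * c ^ 2 * (2 * C) ^ 3 * dist x y)
              + ENNReal.ofReal ((1 / c) * (Φ x y / (dist x y) ^ 2)))
            + ENNReal.ofReal (L.toReal * (Ψ t x y / dist x y)) :=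
            add_le_add_left ENNReal.ofReal_add_le _
        _ = ENNReal.ofReal (c / 2 * V + 2 / 9 * c ^ 2 * (2 * C) ^ 3 * dist x y)
            + (ENNReal.ofReal (1 / c) * ENNReal.ofReal (Φ x y / (dist x y) ^ 2)
              + L * ENNReal.ofReal (Ψ t x y / dist x y)) := by
            rw [ENNReal.ofReal_mul (by positivity : (0:ℝ) ≤ 1 / c),
              ENNReal.ofReal_mul ENNReal.toReal_nonneg, ENNReal.ofReal_toReal hL,
              add_assoc]
    have hT1 : Filter.limsup
        (fun y => ENNReal.ofReal (c / 2 * V + 2 / 9 * c ^ 2 * (2 * C) ^ 3 * dist x y))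
        (𝓝[≠] x) = ENNReal.ofReal (c / 2 * V) := by
      have hd : Tendsto (fun y => dist x y) (𝓝[≠] x) (𝓝 0) := by
        have h0 : Tendsto (fun y => dist x y) (𝓝 x) (𝓝 (dist x x)) :=
          (continuous_const.dist continuous_id).tendsto x
        rw [dist_self] at h0
        exact h0.mono_left nhdsWithin_le_nhds
      have h1 : Tendsto (fun y => c / 2 * V + 2 / 9 * c ^ 2 * (2 * C) ^ 3 * dist x y)
          (𝓝[≠] x) (𝓝 (c / 2 * V)) := by
        have h2 := (hd.const_mul (2 / 9 * c ^ 2 * (2 * C) ^ 3)).const_add (c / 2 * V)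
        simpa using h2
      exact ((ENNReal.continuous_ofReal.tendsto _).comp h1).limsup_eq
    have hT2 : Filter.limsup
        (fun y => ENNReal.ofReal (1 / c) * ENNReal.ofReal (Φ x y / (dist x y) ^ 2)
          + L * ENNReal.ofReal (Ψ t x y / dist x y)) (𝓝[≠] x)
        ≤ ENNReal.ofReal (1 / c) * LamE + L * GamE := by
      refine (my_limsup_add_le _ _).trans ?_
      rw [ENNReal.limsup_const_mul_of_ne_top ENNReal.ofReal_ne_top,
        ENNReal.limsup_const_mul_of_ne_top hL, ← hLamE, ← hGamE]
    have hstart : localSlope (fun z => ∫ w, f w ∂(P t z)) x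
        = Filter.limsup (fun y => ENNReal.ofReal
            (|(∫ w, f w ∂(P t x)) - ∫ w, f w ∂(P t y)| / dist x y)) (𝓝[≠] x) := rfl
    rw [hstart]
    calc Filter.limsup (fun y => ENNReal.ofReal
            (|(∫ w, f w ∂(P t x)) - ∫ w, f w ∂(P t y)| / dist x y)) (𝓝[≠] x)
        ≤ Filter.limsup (fun y =>
            ENNReal.ofReal (c / 2 * V + 2 / 9 * c ^ 2 * (2 * C) ^ 3 * dist x y)
              + (ENNReal.ofReal (1 / c) * ENNReal.ofReal (Φ x y / (dist x y) ^ 2)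
                + L * ENNReal.ofReal (Ψ t x y / dist x y))) (𝓝[≠] x) :=
          Filter.limsup_le_limsup habs
      _ ≤ Filter.limsup
            (fun y => ENNReal.ofReal (c / 2 * V + 2 / 9 * c ^ 2 * (2 * C) ^ 3 * dist x y))
            (𝓝[≠] x)
          + Filter.limsup
            (fun y => ENNReal.ofReal (1 / c) * ENNReal.ofReal (Φ x y / (dist x y) ^ 2)
              + L * ENNReal.ofReal (Ψ t x y / dist x y)) (𝓝[≠] x) := my_limsup_add_le _ _
      _ ≤ ENNReal.ofReal (c / 2 * V) + (ENNReal.ofReal (1 / c) * LamE + L * GamE) := by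
          rw [hT1]
          exact add_le_add_right hT2 _
  -- final optimization over c
  refine ENNReal.le_of_forall_pos_le_add fun ε hε _ => ?_
  have hΛnn : (0:ℝ) ≤ LamE.toReal := ENNReal.toReal_nonneg
  have hεpos : (0:ℝ) < (ε : ℝ) := by exact_mod_cast hε
  obtain ⟨c, hc, hcr⟩ : ∃ c : ℝ, 0 < c ∧
      c / 2 * V + LamE.toReal / c
        ≤ Real.sqrt (2 * LamE.toReal) * Real.sqrt V + (ε : ℝ) := by
    rcases eq_or_lt_of_le hVnn with hV0 | hVpos
    · refine ⟨LamE.toReal / (ε : ℝ) + 1, by positivity, ?_⟩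
      have h1 : LamE.toReal / (LamE.toReal / (ε : ℝ) + 1) ≤ (ε : ℝ) := by
        rw [div_le_iff₀ (by positivity)]
        have h2 : (ε : ℝ) * (LamE.toReal / (ε : ℝ)) = LamE.toReal := by field_simp
        nlinarith
      rw [← hV0]
      simp only [mul_zero, Real.sqrt_zero, zero_add, add_zero]
      linarith
    · rcases eq_or_lt_of_le hΛnn with hΛ0 | hΛpos
      · refine ⟨2 * (ε : ℝ) / V, by positivity, ?_⟩
        rw [← hΛ0]
        have h1 : (2 * (ε : ℝ) / V) / 2 * V = (ε : ℝ) := by field_simp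
        rw [h1]
        simp
      · set a := Real.sqrt (2 * LamE.toReal) with ha_def
        set b := Real.sqrt V with hb_def
        have ha : 0 < a := Real.sqrt_pos.mpr (by linarith)
        have hb : 0 < b := Real.sqrt_pos.mpr hVpos
        have ha2 : a ^ 2 = 2 * LamE.toReal := Real.sq_sqrt (by linarith)
        have hb2 : b ^ 2 = V := Real.sq_sqrt hVnn
        refine ⟨a / b, by positivity, ?_⟩
        have e1 : (a / b) / 2 * V = a * b / 2 := by
          rw [← hb2]; field_simp
        have e2 : LamE.toReal / (a / b) = a * b / 2 := by
          have hΛeq : LamE.toReal = a ^ 2 / 2 := by linarith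
          rw [hΛeq]; field_simp
        rw [e1, e2]
        linarith
  calc localSlope (fun z => ∫ w, f w ∂(P t z)) x
      ≤ ENNReal.ofReal (c / 2 * V) + (ENNReal.ofReal (1 / c) * LamE + L * GamE) :=
        hmain c hc
    _ = ENNReal.ofReal (c / 2 * V + LamE.toReal / c) + L * GamE := by
        have e1 : ENNReal.ofReal (LamE.toReal / c) = ENNReal.ofReal (1 / c) * LamE := by
          rw [← one_div_mul_eq_div, ENNReal.ofReal_mul (by positivity : (0:ℝ) ≤ 1 / c),
            ENNReal.ofReal_toReal hΛ]
        rw [ENNReal.ofReal_add (by positivity)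
          (div_nonneg ENNReal.toReal_nonneg hc.le), e1]
        ring
    _ ≤ (ENNReal.ofReal (Real.sqrt (2 * LamE.toReal) * Real.sqrt V) + (ε : ℝ≥0∞))
          + L * GamE := by
        refine add_le_add_left ?_ _
        rw [← ENNReal.ofReal_coe_nnreal,
          ← ENNReal.ofReal_add (by positivity) (by positivity)]
        exact ENNReal.ofReal_le_ofReal hcr
    _ = ENNReal.ofReal (Real.sqrt (2 * LamE.toReal) * Real.sqrt V) + L * GamE
          + (ε : ℝ≥0∞) := by ring
end

section
/- Let V be a real vector space equipped with two seminorms ‖·‖_H and ‖·‖_V, and let B̄ : V × V × V → ℝ be trilinear with B̄(x,y,z) = −B̄(x,z,y) for all x,y,z ∈ V, and satisfying the bound |B̄(x,y,z)| ≤ K ‖y‖_V √( ‖x‖_H ‖x‖_V ‖z‖_H ‖z‖_V ) for all x,y,z ∈ V and some constant K ∈ (0,∞). Then for all x, y ∈ V: |B̄(x,x,x−y) − B̄(y,y,x−y)| ≤ K ‖x‖_V ‖x−y‖_V ‖x−y‖_H. -/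
/-!
Antisymmetry in the last two slots kills every `B̄(a,b,b)`, so by trilinearity the difference
collapses to `B̄(x−y, x, x−y)`. The bound at first and third argument `x−y` has a perfect square
under the root, which gives the estimate.
-/

section Trilinear

variable {R M N : Type*} [CommRing R] [AddCommGroup M] [Module R M] [AddCommGroup N] [Module R N]
  {B : M →ₗ[R] M →ₗ[R] M →ₗ[R] N}

theorem LinearMap.apply_apply_self_eq_zero_of_antisymm [IsAddTorsionFree N]
    (hanti : ∀ x y z, B x y z = -B x z y) (a b : M) : B a b b = 0 :=
  self_eq_neg.mp (hanti a b b)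

theorem LinearMap.sub_apply_apply_self_eq (hzero : ∀ a b, B a b b = 0) (x y : M) :
    B x x (x - y) - B y y (x - y) = B (x - y) x (x - y) := by
  obtain ⟨d, rfl⟩ : ∃ d, y = x - d := ⟨x - y, (sub_sub_cancel x y).symm⟩
  simp only [sub_sub_cancel, map_sub, LinearMap.sub_apply, hzero]
  abel

end Trilinear

theorem abs_apply_le_of_sqrt_bound {V : Type*} [AddCommGroup V] [Module ℝ V]
    {nH nV : Seminorm ℝ V} {B : V →ₗ[ℝ] V →ₗ[ℝ] V →ₗ[ℝ] ℝ} {K : ℝ}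
    (hbound : ∀ x y z : V, |B x y z| ≤ K * nV y * Real.sqrt (nH x * nV x * nH z * nV z))
    (x d : V) : |B d x d| ≤ K * nV x * nV d * nH d := by
  have hsq : Real.sqrt (nH d * nV d * nH d * nV d) = nH d * nV d := by
    rw [show nH d * nV d * nH d * nV d = (nH d * nV d) * (nH d * nV d) by ring,
      Real.sqrt_mul_self (mul_nonneg (apply_nonneg _ _) (apply_nonneg _ _))]
  calc |B d x d| ≤ K * nV x * Real.sqrt (nH d * nV d * nH d * nV d) := hbound d x d
    _ = K * nV x * nV d * nH d := by rw [hsq]; ring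

theorem trilinear_drift_estimate_general
    {V : Type*} [AddCommGroup V] [Module ℝ V]
    (nH nV : Seminorm ℝ V)
    (B : V →ₗ[ℝ] V →ₗ[ℝ] V →ₗ[ℝ] ℝ)
    (hanti : ∀ x y z : V, B x y z = - B x z y)
    (K : ℝ)
    (hbound : ∀ x y z : V,
      |B x y z| ≤ K * nV y * Real.sqrt (nH x * nV x * nH z * nV z)) :
    ∀ x y : V,
      |B x x (x - y) - B y y (x - y)| ≤ K * nV x * nV (x - y) * nH (x - y) := by
  intro x y
  rw [LinearMap.sub_apply_apply_self_eq (LinearMap.apply_apply_self_eq_zero_of_antisymm hanti)]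
  exact abs_apply_le_of_sqrt_bound hbound x (x - y)

/-- For a trilinear form `B̄` on a real vector space carrying two seminorms `‖·‖_H`
and `‖·‖_V`, antisymmetric in its last two arguments and satisfying
`|B̄(x,y,z)| ≤ K ‖y‖_V √(‖x‖_H ‖x‖_V ‖z‖_H ‖z‖_V)`, one has
`|B̄(x,x,x−y) − B̄(y,y,x−y)| ≤ K ‖x‖_V ‖x−y‖_V ‖x−y‖_H`. -/
theorem trilinear_drift_estimate
    {V : Type*} [AddCommGroup V] [Module ℝ V]
    (nH nV : Seminorm ℝ V)
    (B : V →ₗ[ℝ] V →ₗ[ℝ] V →ₗ[ℝ] ℝ)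
    (hanti : ∀ x y z : V, B x y z = - B x z y)
    (K : ℝ) (hK : 0 < K)
    (hbound : ∀ x y z : V,
      |B x y z| ≤ K * nV y * Real.sqrt (nH x * nV x * nH z * nV z)) :
    ∀ x y : V,
      |B x x (x - y) - B y y (x - y)| ≤ K * nV x * nV (x - y) * nH (x - y) :=
  trilinear_drift_estimate_general nH nV B hanti K hbound
end
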